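/- arXiv:1902.00261 — 4 statements merged into one kernel-verified Lean document; each statement's English description precedes it below -/
import Mathlib

section
/- Let 1 < p ≤ q, 0 < t₁ ≤ t₂, and let φ, ψ_B, and φ_B(t) := ∫₀ᵗ ψ_B(s) ds be as in the regularization construction (ψ_B equals φ' on [t₁,t₂] and has pure (p−1)-power tails). Then for every t ∈ [t₁, t₂]: 0 ≤ φ_B(t) − φ(t) ≤ (q/p − 1)·φ(t₁). -/
/-!
On `[0, t₁]` the regularization `ψ_B` is the pure power `φ'(t₁) (s/t₁)^(p-1)`, whose integral is
`t₁ φ'(t₁) / p`, and on `[t₁, t]` it coincides with `φ'`. Hence `φ_B(t) - φ(t)` does not depend on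
`t ∈ [t₁, t₂]` and equals `t₁ φ'(t₁) / p - φ(t₁)`. Comparing `φ'` on `(0, t₁]` with the powers
`φ'(t₁) (s/t₁)^(p-1)` and `φ'(t₁) (s/t₁)^(q-1)` (this is what `(Inc)_{p-1}` and `(Dec)_{q-1}` say)
and integrating gives `t₁ φ'(t₁) / q ≤ φ(t₁) ≤ t₁ φ'(t₁) / p`, which yields both bounds.
-/

open MeasureTheory Set

section PowerProfile

variable {a r : ℝ}

lemma div_rpow_eqOn_Ici (ha : 0 < a) :
    EqOn (fun s : ℝ => (s / a) ^ r) (fun s => s ^ r * a ^ (-r)) (Ici 0) := fun s hs => by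
  simp only
  rw [Real.div_rpow hs ha.le, Real.rpow_neg ha.le, div_eq_mul_inv]

lemma intervalIntegrable_div_rpow (ha : 0 < a) (hr : -1 < r) :
    IntervalIntegrable (fun s : ℝ => (s / a) ^ r) volume 0 a :=
  ((intervalIntegral.intervalIntegrable_rpow' hr).mul_const _).congr fun _ hs =>
    (div_rpow_eqOn_Ici ha (Ioc_subset_Ioi_self (uIoc_of_le ha.le ▸ hs)).le).symm

lemma integral_div_rpow (ha : 0 < a) (hr : -1 < r) :
    ∫ s in (0:ℝ)..a, (s / a) ^ r = a / (r + 1) := by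
  have hEq : EqOn (fun s : ℝ => (s / a) ^ r) (fun s => s ^ r * a ^ (-r)) (uIcc 0 a) :=
    (div_rpow_eqOn_Ici ha).mono fun _ hs => (uIcc_of_le ha.le ▸ hs).1
  rw [intervalIntegral.integral_congr hEq, intervalIntegral.integral_mul_const,
    integral_rpow (Or.inl hr), Real.zero_rpow (by linarith), sub_zero, div_mul_eq_mul_div,
    ← Real.rpow_add ha, show r + 1 + -r = 1 by ring, Real.rpow_one]

end PowerProfile

section RatioMonotone

variable {f : ℝ → ℝ} {r s t : ℝ}

lemma le_mul_div_rpow_of_monotoneOn (hf : MonotoneOn (fun t => f t / t ^ r) (Ioi 0))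
    (hs : 0 < s) (hst : s ≤ t) : f s ≤ f t * (s / t) ^ r := by
  have ht : 0 < t := hs.trans_le hst
  have h := hf hs ht hst
  rw [div_le_div_iff₀ (Real.rpow_pos_of_pos hs r) (Real.rpow_pos_of_pos ht r)] at h
  rw [Real.div_rpow hs.le ht.le, ← mul_div_assoc, le_div_iff₀ (Real.rpow_pos_of_pos ht r)]
  linarith

lemma mul_div_rpow_le_of_antitoneOn (hf : AntitoneOn (fun t => f t / t ^ r) (Ioi 0))
    (hs : 0 < s) (hst : s ≤ t) : f t * (s / t) ^ r ≤ f s := by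
  have ht : 0 < t := hs.trans_le hst
  have h := hf hs ht hst
  rw [div_le_div_iff₀ (Real.rpow_pos_of_pos ht r) (Real.rpow_pos_of_pos hs r)] at h
  rw [Real.div_rpow hs.le ht.le, ← mul_div_assoc, div_le_iff₀ (Real.rpow_pos_of_pos ht r)]
  linarith

lemma integral_le_of_monotoneOn_div_rpow (hf : MonotoneOn (fun t => f t / t ^ r) (Ioi 0))
    (hr : -1 < r) (ht : 0 < t) (hfi : IntervalIntegrable f volume 0 t) :
    ∫ s in (0:ℝ)..t, f s ≤ f t * t / (r + 1) := by
  calc ∫ s in (0:ℝ)..t, f s ≤ ∫ s in (0:ℝ)..t, f t * (s / t) ^ r :=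
        intervalIntegral.integral_mono_on_of_le_Ioo ht.le hfi
          ((intervalIntegrable_div_rpow ht hr).const_mul _)
          fun s hs => le_mul_div_rpow_of_monotoneOn hf hs.1 hs.2.le
    _ = f t * t / (r + 1) := by
        rw [intervalIntegral.integral_const_mul, integral_div_rpow ht hr, mul_div_assoc]

lemma le_integral_of_antitoneOn_div_rpow (hf : AntitoneOn (fun t => f t / t ^ r) (Ioi 0))
    (hr : -1 < r) (ht : 0 < t) (hfi : IntervalIntegrable f volume 0 t) :
    f t * t / (r + 1) ≤ ∫ s in (0:ℝ)..t, f s := by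
  calc f t * t / (r + 1) = ∫ s in (0:ℝ)..t, f t * (s / t) ^ r := by
        rw [intervalIntegral.integral_const_mul, integral_div_rpow ht hr, mul_div_assoc]
    _ ≤ ∫ s in (0:ℝ)..t, f s :=
        intervalIntegral.integral_mono_on_of_le_Ioo ht.le
          ((intervalIntegrable_div_rpow ht hr).const_mul _) hfi
          fun s hs => mul_div_rpow_le_of_antitoneOn hf hs.1 hs.2.le

end RatioMonotone

/-- The paper's `ψ_B`. -/
noncomputable def regularizedDeriv (φ' : ℝ → ℝ) (p t₁ t₂ : ℝ) (s : ℝ) : ℝ :=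
  if s < t₁ then φ' t₁ * (s / t₁) ^ (p - 1)
  else if s ≤ t₂ then φ' s
  else φ' t₂ * (s / t₂) ^ (p - 1)

section RegularizedDeriv

variable {φ' : ℝ → ℝ} {p t₁ t₂ t : ℝ}

lemma regularizedDeriv_eqOn_Icc_zero (ht₁ : 0 < t₁) (ht : t₁ ≤ t₂) :
    EqOn (regularizedDeriv φ' p t₁ t₂) (fun s => φ' t₁ * (s / t₁) ^ (p - 1)) (Icc 0 t₁) := by
  rintro s ⟨-, hst₁⟩
  rcases hst₁.lt_or_eq with hlt | rfl
  · simp [regularizedDeriv, hlt]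
  · simp [regularizedDeriv, ht, div_self ht₁.ne']

lemma regularizedDeriv_eqOn_Icc : EqOn (regularizedDeriv φ' p t₁ t₂) φ' (Icc t₁ t₂) := by
  rintro s ⟨hs₁, hs₂⟩
  simp [regularizedDeriv, not_lt.mpr hs₁, hs₂]

lemma integral_regularizedDeriv_sub (hp : 0 < p) (ht₁ : 0 < t₁) (ht : t ∈ Icc t₁ t₂)
    (hint : IntervalIntegrable φ' volume 0 t) :
    (∫ s in (0:ℝ)..t, regularizedDeriv φ' p t₁ t₂ s) - ∫ s in (0:ℝ)..t, φ' s
      = φ' t₁ * t₁ / p - ∫ s in (0:ℝ)..t₁, φ' s := by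
  have hr : -1 < p - 1 := by linarith
  have hEq₁ : EqOn (regularizedDeriv φ' p t₁ t₂) (fun s => φ' t₁ * (s / t₁) ^ (p - 1))
      (uIcc 0 t₁) := uIcc_of_le ht₁.le ▸ regularizedDeriv_eqOn_Icc_zero ht₁ (ht.1.trans ht.2)
  have hEq₂ : EqOn (regularizedDeriv φ' p t₁ t₂) φ' (uIcc t₁ t) :=
    uIcc_of_le ht.1 ▸ regularizedDeriv_eqOn_Icc.mono (Icc_subset_Icc_right ht.2)
  have ht₁_mem : t₁ ∈ uIcc 0 t := mem_uIcc_of_le ht₁.le ht.1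
  have hint₁ : IntervalIntegrable φ' volume 0 t₁ :=
    hint.mono_set (uIcc_subset_uIcc_left ht₁_mem)
  have hint₂ : IntervalIntegrable φ' volume t₁ t :=
    hint.mono_set (uIcc_subset_uIcc_right ht₁_mem)
  have hψ₁ : IntervalIntegrable (regularizedDeriv φ' p t₁ t₂) volume 0 t₁ :=
    ((intervalIntegrable_div_rpow ht₁ hr).const_mul _).congr fun _ hs =>
      (hEq₁ (uIoc_subset_uIcc hs)).symm
  have hψ₂ : IntervalIntegrable (regularizedDeriv φ' p t₁ t₂) volume t₁ t :=
    hint₂.congr fun _ hs => (hEq₂ (uIoc_subset_uIcc hs)).symm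
  rw [← intervalIntegral.integral_add_adjacent_intervals hψ₁ hψ₂,
    ← intervalIntegral.integral_add_adjacent_intervals hint₁ hint₂,
    intervalIntegral.integral_congr hEq₁, intervalIntegral.integral_congr hEq₂,
    intervalIntegral.integral_const_mul, integral_div_rpow ht₁ hr, sub_add_cancel]
  ring

end RegularizedDeriv

theorem stmt_12_general (p q t₁ t₂ : ℝ) (hp : 1 < p) (hpq : p ≤ q) (ht₁ : 0 < t₁)
    (φ φ' : ℝ → ℝ)
    (hrepr : ∀ t, 0 ≤ t → φ t = ∫ s in (0:ℝ)..t, φ' s)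
    (hint : ∀ t : ℝ, IntervalIntegrable φ' MeasureTheory.volume 0 t)
    (hInc : MonotoneOn (fun t => φ' t / t ^ (p - 1)) (Set.Ioi (0:ℝ)))
    (hDec : AntitoneOn (fun t => φ' t / t ^ (q - 1)) (Set.Ioi (0:ℝ))) :
    ∀ t ∈ Set.Icc t₁ t₂,
      0 ≤ (∫ s in (0:ℝ)..t,
            (if s < t₁ then φ' t₁ * (s / t₁) ^ (p - 1)
             else if s ≤ t₂ then φ' s
             else φ' t₂ * (s / t₂) ^ (p - 1))) - φ t ∧
      (∫ s in (0:ℝ)..t,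
            (if s < t₁ then φ' t₁ * (s / t₁) ^ (p - 1)
             else if s ≤ t₂ then φ' s
             else φ' t₂ * (s / t₂) ^ (p - 1))) - φ t ≤ (q / p - 1) * φ t₁ := by
  intro t htmem
  change 0 ≤ (∫ s in (0:ℝ)..t, regularizedDeriv φ' p t₁ t₂ s) - φ t ∧
    (∫ s in (0:ℝ)..t, regularizedDeriv φ' p t₁ t₂ s) - φ t ≤ (q / p - 1) * φ t₁
  have hp₀ : 0 < p := by linarith
  have hgap := integral_regularizedDeriv_sub hp₀ ht₁ htmem (hint t)
  rw [← hrepr t (ht₁.le.trans htmem.1), ← hrepr t₁ ht₁.le] at hgap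
  have hupper : φ t₁ ≤ φ' t₁ * t₁ / p := by
    simpa [hrepr t₁ ht₁.le] using
      integral_le_of_monotoneOn_div_rpow hInc (by linarith) ht₁ (hint t₁)
  have hlower : φ' t₁ * t₁ / q ≤ φ t₁ := by
    simpa [hrepr t₁ ht₁.le] using
      le_integral_of_antitoneOn_div_rpow hDec (by linarith) ht₁ (hint t₁)
  rw [hgap]
  refine ⟨by linarith, ?_⟩
  have hq₀ : 0 < q := hp₀.trans_le hpq
  rw [div_le_iff₀ hq₀] at hlower
  rw [sub_mul, one_mul, div_mul_eq_mul_div, sub_le_sub_iff_right]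
  exact div_le_div_of_nonneg_right (by linarith) hp₀.le

/-- With φ(t) = ∫₀ᵗ φ' and φ_B(t) = ∫₀ᵗ ψ_B (ψ_B the regularization of φ'
that equals φ' on [t₁,t₂] with (p−1)-power tails), one has
0 ≤ φ_B(t) − φ(t) ≤ (q/p − 1)·φ(t₁) for every t ∈ [t₁,t₂]. -/
theorem stmt_12 (p q t₁ t₂ : ℝ) (hp : 1 < p) (hpq : p ≤ q) (ht₁ : 0 < t₁) (ht : t₁ ≤ t₂)
    (φ φ' : ℝ → ℝ) (hφ0 : φ 0 = 0)
    (hcont : ContinuousOn φ' (Set.Ici (0:ℝ)))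
    (hnn : ∀ t, 0 ≤ t → 0 ≤ φ' t)
    (hrepr : ∀ t, 0 ≤ t → φ t = ∫ s in (0:ℝ)..t, φ' s)
    (hint : ∀ t : ℝ, IntervalIntegrable φ' MeasureTheory.volume 0 t)
    (hInc : MonotoneOn (fun t => φ' t / t ^ (p - 1)) (Set.Ioi (0:ℝ)))
    (hDec : AntitoneOn (fun t => φ' t / t ^ (q - 1)) (Set.Ioi (0:ℝ))) :
    ∀ t ∈ Set.Icc t₁ t₂,
      0 ≤ (∫ s in (0:ℝ)..t,
            (if s < t₁ then φ' t₁ * (s / t₁) ^ (p - 1)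
             else if s ≤ t₂ then φ' s
             else φ' t₂ * (s / t₂) ^ (p - 1))) - φ t ∧
      (∫ s in (0:ℝ)..t,
            (if s < t₁ then φ' t₁ * (s / t₁) ^ (p - 1)
             else if s ≤ t₂ then φ' s
             else φ' t₂ * (s / t₂) ^ (p - 1))) - φ t ≤ (q / p - 1) * φ t₁ :=
  stmt_12_general p q t₁ t₂ hp hpq ht₁ φ φ' hrepr hint hInc hDec
end

section
/- Let 1 < p₁ ≤ q₁, L ≥ 1, and let θ : B × [0,∞) → [0,∞) satisfy: (A0) L⁻¹ ≤ θ(x,1) ≤ L for all x; (aInc)_{p₁} and (aDec)_{q₁} with constant L; and the (A1)-type condition that θ⁺_{B'}(t) ≤ L·θ⁻_{B'}(t) whenever θ⁻_{B'}(t) ∈ [1, |B'|⁻¹] for balls B' ⊆ B. Define θ̃(x,t) := θ(x,t) + t^{p₁}. Then θ̃ satisfies the strengthened condition: there is L₁ ≥ 1 depending only on p₁, q₁, L such that θ̃⁺_{B'}(t) ≤ L₁·θ̃⁻_{B'}(t) whenever θ̃⁻_{B'}(t) ∈ [0, |B'|⁻¹], for all balls B' ⊆ B. -/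
open MeasureTheory

/-- If θ satisfies (A0), (aInc)_{p₁}, (aDec)_{q₁} with constant L and the
(A1) condition on balls B' ⊆ B in the range θ⁻ ∈ [1, |B'|⁻¹], then θ̃(x,t) = θ(x,t) + t^{p₁}
satisfies the strengthened (A1) condition: there is L₁ ≥ 1, depending only on p₁, q₁, L,
with θ̃⁺_{B'}(t) ≤ L₁ θ̃⁻_{B'}(t) whenever θ̃⁻_{B'}(t) ∈ [0, |B'|⁻¹]. -/
theorem stmt_16 (p₁ q₁ L : ℝ) (hp : 1 < p₁) (hpq : p₁ ≤ q₁) (hL : 1 ≤ L) :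
    ∃ L₁ : ℝ, 1 ≤ L₁ ∧
      ∀ (n : ℕ) (B : Set (EuclideanSpace ℝ (Fin n)))
        (θ : EuclideanSpace ℝ (Fin n) → ℝ → ℝ),
        (∀ x ∈ B, ∀ t : ℝ, 0 ≤ t → 0 ≤ θ x t) →
        (∀ x ∈ B, L⁻¹ ≤ θ x 1 ∧ θ x 1 ≤ L) →
        (∀ x ∈ B, ∀ s t : ℝ, 0 < s → s ≤ t → θ x s / s ^ p₁ ≤ L * (θ x t / t ^ p₁)) →
        (∀ x ∈ B, ∀ s t : ℝ, 0 < s → s ≤ t → θ x t / t ^ q₁ ≤ L * (θ x s / s ^ q₁)) →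
        (∀ (z : EuclideanSpace ℝ (Fin n)) (ρ : ℝ), 0 < ρ → Metric.ball z ρ ⊆ B →
          ∀ t : ℝ, 0 < t →
          1 ≤ sInf ((fun x => θ x t) '' Metric.ball z ρ) →
          sInf ((fun x => θ x t) '' Metric.ball z ρ) ≤
            ((volume (Metric.ball z ρ)).toReal)⁻¹ →
          sSup ((fun x => θ x t) '' Metric.ball z ρ) ≤
            L * sInf ((fun x => θ x t) '' Metric.ball z ρ)) →
        ∀ (z : EuclideanSpace ℝ (Fin n)) (ρ : ℝ), 0 < ρ → Metric.ball z ρ ⊆ B →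
          ∀ t : ℝ, 0 < t →
          sInf ((fun x => θ x t + t ^ p₁) '' Metric.ball z ρ) ≤
            ((volume (Metric.ball z ρ)).toReal)⁻¹ →
          sSup ((fun x => θ x t + t ^ p₁) '' Metric.ball z ρ) ≤
            L₁ * sInf ((fun x => θ x t + t ^ p₁) '' Metric.ball z ρ) := by
  have hL0 : (0:ℝ) < L := lt_of_lt_of_le one_pos hL
  have hp0 : (0:ℝ) < p₁ := lt_trans one_pos hp
  set C : ℝ := (L * L) ^ ((q₁ - p₁) / p₁) with hCdef
  have hLL : (1:ℝ) ≤ L * L := one_le_mul_of_one_le_of_one_le hL hL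
  have hC1 : (1:ℝ) ≤ C := Real.one_le_rpow hLL (div_nonneg (by linarith) hp0.le)
  set L₁ : ℝ := L * L * C + 1 with hL₁def
  have hL₁1 : (1:ℝ) ≤ L₁ := by nlinarith
  have hLL₁ : L ≤ L₁ := by nlinarith
  refine ⟨L₁, hL₁1, ?_⟩
  intro n B θ hnn hA0 hInc hDec hA1 z ρ hρ hsub t ht hsmall
  have hc : (0:ℝ) < t ^ p₁ := Real.rpow_pos_of_pos ht p₁
  have hball : (Metric.ball z ρ).Nonempty := Metric.nonempty_ball.2 hρ
  set S : Set ℝ := (fun x => θ x t) '' Metric.ball z ρ with hSdef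
  set S' : Set ℝ := (fun x => θ x t + (t ^ p₁)) '' Metric.ball z ρ with hS'def
  have hneS : S.Nonempty := hball.image _
  have hneS' : S'.Nonempty := hball.image _
  have hSnn : ∀ y ∈ S, (0:ℝ) ≤ y := by
    rintro y ⟨x, hx, rfl⟩
    exact hnn x (hsub hx) t ht.le
  have hbddS : BddBelow S := ⟨0, fun y hy => hSnn y hy⟩
  have hbddS' : BddBelow S' := by
    refine ⟨0, ?_⟩
    rintro y ⟨x, hx, rfl⟩
    have := hnn x (hsub hx) t ht.le
    dsimp; linarith
  set m : ℝ := sInf S with hmdef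
  have hm0 : 0 ≤ m := le_csInf hneS hSnn
  -- sInf S' = m + (t ^ p₁)
  have hInf1 : m + (t ^ p₁) ≤ sInf S' := by
    refine le_csInf hneS' ?_
    rintro y ⟨x, hx, rfl⟩
    have : m ≤ θ x t := csInf_le hbddS ⟨x, hx, rfl⟩
    dsimp; linarith
  have hInf2 : sInf S' ≤ m + (t ^ p₁) := by
    have h : sInf S' - (t ^ p₁) ≤ m := by
      refine le_csInf hneS ?_
      rintro y ⟨x, hx, rfl⟩
      have : sInf S' ≤ θ x t + (t ^ p₁) := csInf_le hbddS' ⟨x, hx, rfl⟩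
      linarith
    linarith
  have hInfEq : sInf S' = m + (t ^ p₁) := le_antisymm hInf2 hInf1
  rw [hInfEq] at hsmall ⊢
  have hmc0 : 0 ≤ m + (t ^ p₁) := by linarith
  by_cases hm1 : 1 ≤ m
  · -- use (A1) for θ
    have hmV : m ≤ ((volume (Metric.ball z ρ)).toReal)⁻¹ := by linarith
    have hA := hA1 z ρ hρ hsub t ht hm1 hmV
    by_cases hba : BddAbove S
    · refine Real.sSup_le ?_ (by nlinarith)
      rintro y ⟨x, hx, rfl⟩
      have h1 : θ x t ≤ sSup S := le_csSup hba ⟨x, hx, rfl⟩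
      have h2 : θ x t ≤ L * m := le_trans h1 hA
      have hcL : (t ^ p₁) ≤ L * (t ^ p₁) := by nlinarith
      dsimp
      nlinarith
    · have hba' : ¬ BddAbove S' := by
        rintro ⟨b, hb⟩
        refine hba ⟨b - (t ^ p₁), ?_⟩
        rintro y ⟨x, hx, rfl⟩
        have : θ x t + (t ^ p₁) ≤ b := hb ⟨x, hx, rfl⟩
        dsimp; linarith
      rw [Real.sSup_of_not_bddAbove hba']
      nlinarith
  · -- small case
    push_neg at hm1
    obtain ⟨a, haS, ha1⟩ := exists_lt_of_csInf_lt hneS hm1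
    obtain ⟨x₀, hx₀, rfl⟩ := haS
    have hx₀B := hsub hx₀
    have ha0 : 0 ≤ θ x₀ t := hnn x₀ hx₀B t ht.le
    have hT : (t ^ p₁) ≤ L * L := by
      rcases le_or_gt t 1 with h | h
      · have : t ^ p₁ ≤ 1 := Real.rpow_le_one ht.le h hp0.le
        linarith
      · have key := hInc x₀ hx₀B 1 t one_pos h.le
        rw [Real.one_rpow, div_one] at key
        have hθ1 := (hA0 x₀ hx₀B).1
        have hkey : θ x₀ 1 * (t ^ p₁) ≤ L * θ x₀ t := by
          rw [← mul_div_assoc, le_div_iff₀ hc] at key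
          exact key
        have hinv : L * L⁻¹ = 1 := mul_inv_cancel₀ (ne_of_gt hL0)
        nlinarith [mul_le_mul_of_nonneg_right hθ1 hc.le,
          mul_lt_mul_of_pos_left ha1 hL0]
    have hKbound : ∀ x ∈ Metric.ball z ρ, θ x t ≤ L * L * C * (t ^ p₁) := by
      intro x hx
      have hxB := hsub hx
      have hθ1 := (hA0 x hxB).2
      have hθ1' := (hA0 x hxB).1
      have hθ0 : 0 ≤ θ x t := hnn x hxB t ht.le
      rcases le_or_gt t 1 with h | h
      · have key := hInc x hxB t 1 ht h
        rw [Real.one_rpow, div_one] at key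
        have h2 : θ x t / (t ^ p₁) ≤ L * L :=
          key.trans (mul_le_mul_of_nonneg_left hθ1 hL0.le)
        have h3 : θ x t ≤ L * L * (t ^ p₁) := by
          rw [div_le_iff₀ hc] at h2; linarith
        have h4 : L * L * (t ^ p₁) ≤ L * L * C * (t ^ p₁) :=
          mul_le_mul_of_nonneg_right
            (le_mul_of_one_le_right (by positivity) hC1) hc.le
        exact h3.trans h4
      · have key := hDec x hxB 1 t one_pos h.le
        rw [Real.one_rpow, div_one] at key
        have hq : (0:ℝ) < t ^ q₁ := Real.rpow_pos_of_pos ht q₁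
        have h2 : θ x t / t ^ q₁ ≤ L * L :=
          key.trans (mul_le_mul_of_nonneg_left hθ1 hL0.le)
        have h3 : θ x t ≤ L * L * t ^ q₁ := by
          rw [div_le_iff₀ hq] at h2; linarith
        have hqsplit : t ^ q₁ = (t ^ p₁) * t ^ (q₁ - p₁) := by
          rw [← Real.rpow_add ht]; ring_nf
        have hT' : t ^ p₁ ≤ L * L := hT
        have htle : t ≤ (L * L) ^ p₁⁻¹ := by
          have h5 : (t ^ p₁) ^ p₁⁻¹ ≤ (L * L) ^ p₁⁻¹ :=
            Real.rpow_le_rpow (Real.rpow_pos_of_pos ht p₁).le hT' (inv_nonneg.2 hp0.le)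
          rwa [← Real.rpow_mul ht.le, mul_inv_cancel₀ (ne_of_gt hp0),
            Real.rpow_one] at h5
        have htqp : t ^ (q₁ - p₁) ≤ C := by
          have h4 := Real.rpow_le_rpow ht.le htle (by linarith : (0:ℝ) ≤ q₁ - p₁)
          rwa [← Real.rpow_mul (by positivity : (0:ℝ) ≤ L * L),
            inv_mul_eq_div] at h4
        calc θ x t ≤ L * L * ((t ^ p₁) * t ^ (q₁ - p₁)) := by rw [← hqsplit]; exact h3
          _ ≤ L * L * ((t ^ p₁) * C) :=
              mul_le_mul_of_nonneg_left
                (mul_le_mul_of_nonneg_left htqp hc.le) (by positivity)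
          _ = L * L * C * (t ^ p₁) := by ring
    have hLLC0 : (0:ℝ) ≤ L * L * C :=
      mul_nonneg (mul_nonneg hL0.le hL0.le) (le_trans zero_le_one hC1)
    refine Real.sSup_le ?_ (mul_nonneg (by linarith) hmc0)
    rintro y ⟨x, hx, rfl⟩
    have hb := hKbound x hx
    have hnonneg : 0 ≤ (L * L * C) * m := mul_nonneg hLLC0 hm0
    have hexp : L₁ * (m + (t ^ p₁)) =
        (L * L * C) * m + (L * L * C) * (t ^ p₁) + m + (t ^ p₁) := by
      rw [hL₁def]; ring
    dsimp
    linarith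
end

section
/- Let 1 < p ≤ q, let φ : B × [0,∞) → [0,∞) with each φ(x,·) strictly increasing, continuous, φ(x,0)=0, and satisfying the (A1) condition: φ⁺_{B'}(t) ≤ L·φ⁻_{B'}(t) whenever φ⁻_{B'}(t) ∈ [1, |B'|⁻¹] for balls B' ⊆ B. Let φ̃ : [0,∞) → [0,∞) be any increasing bijection and σ > 0. Define θ(x,t) := [φ(x, φ̃⁻¹(t))]^{1+σ}. Then θ satisfies (A1) with constant L²: θ⁺_{B'}(t) ≤ L²·θ⁻_{B'}(t) whenever θ⁻_{B'}(t) ∈ [1, |B'|⁻¹], for all balls B' ⊆ B with |B'| ≤ 1. -/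
open MeasureTheory

/-- If φ(x,·) is strictly increasing, continuous, vanishing at 0, and
satisfies (A1) on balls B' ⊆ B with constant L, and φ̃ is an increasing bijection of
[0,∞) with inverse ι, then θ(x,t) = φ(x, φ̃⁻¹(t))^{1+σ} (σ ∈ (0,1]) satisfies (A1)
with constant L² on balls B' ⊆ B with |B'| ≤ 1. -/
theorem stmt_17 (n : ℕ) (p q L σ : ℝ) (hp : 1 < p) (hpq : p ≤ q) (hL : 1 ≤ L)
    (hσ : 0 < σ) (hσ1 : σ ≤ 1)
    (B : Set (EuclideanSpace ℝ (Fin n))) (φ : EuclideanSpace ℝ (Fin n) → ℝ → ℝ)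
    (hφ : ∀ x ∈ B, StrictMonoOn (φ x) (Set.Ici (0:ℝ)) ∧
      ContinuousOn (φ x) (Set.Ici (0:ℝ)) ∧ φ x 0 = 0)
    (φt ι : ℝ → ℝ) (hφt : StrictMonoOn φt (Set.Ici (0:ℝ)))
    (hφtnn : ∀ s : ℝ, 0 ≤ s → 0 ≤ φt s)
    (hι : ∀ t : ℝ, 0 ≤ t → 0 ≤ ι t ∧ φt (ι t) = t)
    (hι2 : ∀ s : ℝ, 0 ≤ s → ι (φt s) = s)
    (hA1 : ∀ (z : EuclideanSpace ℝ (Fin n)) (ρ : ℝ), 0 < ρ → Metric.ball z ρ ⊆ B →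
      ∀ t : ℝ, 0 < t →
      1 ≤ sInf ((fun x => φ x t) '' Metric.ball z ρ) →
      sInf ((fun x => φ x t) '' Metric.ball z ρ) ≤ ((volume (Metric.ball z ρ)).toReal)⁻¹ →
      sSup ((fun x => φ x t) '' Metric.ball z ρ) ≤
        L * sInf ((fun x => φ x t) '' Metric.ball z ρ)) :
    ∀ (z : EuclideanSpace ℝ (Fin n)) (ρ : ℝ), 0 < ρ → Metric.ball z ρ ⊆ B →
      (volume (Metric.ball z ρ)).toReal ≤ 1 →
      ∀ t : ℝ, 0 < t →
      1 ≤ sInf ((fun x => (φ x (ι t)) ^ (1 + σ)) '' Metric.ball z ρ) →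
      sInf ((fun x => (φ x (ι t)) ^ (1 + σ)) '' Metric.ball z ρ) ≤
        ((volume (Metric.ball z ρ)).toReal)⁻¹ →
      sSup ((fun x => (φ x (ι t)) ^ (1 + σ)) '' Metric.ball z ρ) ≤
        L ^ 2 * sInf ((fun x => (φ x (ι t)) ^ (1 + σ)) '' Metric.ball z ρ) := by
  intro z ρ hρ hBsub hV1 t ht h1 h2
  have hne : (Metric.ball z ρ).Nonempty := Metric.nonempty_ball.mpr hρ
  set s : ℝ := ι t with hs
  have hs0 : 0 ≤ s := (hι t ht.le).1
  have h1σ : (0:ℝ) < 1 + σ := by linarith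
  -- nonnegativity of φ on the ball
  have hφnn : ∀ x ∈ Metric.ball z ρ, 0 ≤ φ x s := by
    intro x hx
    obtain ⟨hsm, _, h0⟩ := hφ x (hBsub hx)
    have := hsm.monotoneOn (Set.self_mem_Ici) (Set.mem_Ici.mpr hs0) hs0
    linarith [h0 ▸ this]
  -- s ≠ 0
  have hspos : 0 < s := by
    rcases lt_or_eq_of_le hs0 with h | h
    · exact h
    · exfalso
      obtain ⟨x0, hx0⟩ := hne
      have h0 : φ x0 s = 0 := by
        rw [← h]; exact (hφ x0 (hBsub hx0)).2.2
      have hmem : (0:ℝ) ∈ (fun x => (φ x s) ^ (1 + σ)) '' Metric.ball z ρ := by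
        refine ⟨x0, hx0, ?_⟩
        show φ x0 s ^ (1 + σ) = 0
        rw [h0, Real.zero_rpow (by positivity)]
      have hbb : BddBelow ((fun x => (φ x s) ^ (1 + σ)) '' Metric.ball z ρ) := by
        refine ⟨0, ?_⟩
        rintro y ⟨x, hx, rfl⟩
        exact Real.rpow_nonneg (hφnn x hx) _
      have := csInf_le hbb hmem
      linarith
  set θim := (fun x => (φ x s) ^ (1 + σ)) '' Metric.ball z ρ with hθim
  set φim := (fun x => φ x s) '' Metric.ball z ρ with hφim
  have hθne : θim.Nonempty := hne.image _
  have hφne : φim.Nonempty := hne.image _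
  have hφbb : BddBelow φim := by
    refine ⟨0, ?_⟩; rintro y ⟨x, hx, rfl⟩; exact hφnn x hx
  have hθbb : BddBelow θim := by
    refine ⟨0, ?_⟩; rintro y ⟨x, hx, rfl⟩
    exact Real.rpow_nonneg (hφnn x hx) _
  set m := sInf φim with hm
  set c := sInf θim with hc
  have hm0 : 0 ≤ m := le_csInf hφne (by rintro y ⟨x, hx, rfl⟩; exact hφnn x hx)
  have hc1 : 1 ≤ c := h1
  have hc0 : (0:ℝ) ≤ c := by linarith
  -- lower bound : m^(1+σ) ≤ c
  have hlb : m ^ (1 + σ) ≤ c := by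
    refine le_csInf hθne ?_
    rintro y ⟨x, hx, rfl⟩
    exact Real.rpow_le_rpow hm0 (csInf_le hφbb ⟨x, hx, rfl⟩) h1σ.le
  -- c^(1/(1+σ)) ≤ m
  have hub : c ^ (1 / (1 + σ)) ≤ m := by
    refine le_csInf hφne ?_
    rintro y ⟨x, hx, rfl⟩
    have h3 : c ≤ (φ x s) ^ (1 + σ) := csInf_le hθbb ⟨x, hx, rfl⟩
    have h4 := Real.rpow_le_rpow hc0 h3 (by positivity : (0:ℝ) ≤ 1 / (1 + σ))
    rwa [← Real.rpow_mul (hφnn x hx), mul_one_div, div_self (ne_of_gt h1σ),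
      Real.rpow_one] at h4
  have hm1 : 1 ≤ m := by
    calc (1:ℝ) = 1 ^ (1 / (1 + σ)) := (Real.one_rpow _).symm
    _ ≤ c ^ (1 / (1 + σ)) := Real.rpow_le_rpow zero_le_one hc1 (by positivity)
    _ ≤ m := hub
  -- volume facts
  have hVpos : 0 < (volume (Metric.ball z ρ)).toReal :=
    ENNReal.toReal_pos (ne_of_gt (Metric.measure_ball_pos volume z hρ))
      (ne_of_lt measure_ball_lt_top)
  -- m ≤ V⁻¹
  have hmV : m ≤ ((volume (Metric.ball z ρ)).toReal)⁻¹ := by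
    have : m ≤ m ^ (1 + σ) := by
      calc m = m ^ (1:ℝ) := (Real.rpow_one m).symm
      _ ≤ m ^ (1 + σ) := Real.rpow_le_rpow_of_exponent_le hm1 (by linarith)
    linarith [hlb, h2]
  -- apply (A1) for φ
  have hA1' := hA1 z ρ hρ hBsub s hspos hm1 hmV
  -- case on boundedness of θim
  by_cases hbdd : BddAbove θim
  · obtain ⟨C, hC⟩ := hbdd
    have hφba : BddAbove φim := by
      refine ⟨C ^ (1 / (1 + σ)), ?_⟩
      rintro y ⟨x, hx, rfl⟩
      have h3 : (φ x s) ^ (1 + σ) ≤ C := hC ⟨x, hx, rfl⟩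
      have h4 := Real.rpow_le_rpow (Real.rpow_nonneg (hφnn x hx) _) h3
        (by positivity : (0:ℝ) ≤ 1 / (1 + σ))
      rwa [← Real.rpow_mul (hφnn x hx), mul_one_div, div_self (ne_of_gt h1σ),
        Real.rpow_one] at h4
    set M := sSup φim with hM
    refine csSup_le hθne ?_
    rintro y ⟨x, hx, rfl⟩
    have hxM : φ x s ≤ M := le_csSup hφba ⟨x, hx, rfl⟩
    have hM0' : 0 ≤ M := le_trans (hφnn x hx) hxM
    have step1 : (φ x s) ^ (1 + σ) ≤ (L * m) ^ (1 + σ) :=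
      Real.rpow_le_rpow (hφnn x hx) (le_trans hxM hA1') h1σ.le
    have step2 : (L * m) ^ (1 + σ) = L ^ (1 + σ) * m ^ (1 + σ) :=
      Real.mul_rpow (by linarith) hm0
    have step3 : L ^ (1 + σ) ≤ L ^ 2 := by
      have : L ^ (1 + σ) ≤ L ^ ((2:ℕ):ℝ) :=
        Real.rpow_le_rpow_of_exponent_le hL (by push_cast; linarith)
      rwa [Real.rpow_natCast] at this
    have step4 : L ^ (1 + σ) * m ^ (1 + σ) ≤ L ^ 2 * c := by
      have hmp : 0 ≤ m ^ (1 + σ) := Real.rpow_nonneg hm0 _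
      have := mul_le_mul step3 hlb hmp (by positivity)
      linarith
    linarith [step1, step2 ▸ step1]
  · rw [Real.sSup_of_not_bddAbove hbdd]
    have : (0:ℝ) ≤ L ^ 2 * c := by positivity
    linarith
end

section
/- Let 1 < p ≤ q and let φ : [0,∞) → [0,∞) be C¹ with φ(0)=0, φ' satisfying φ'(t)/t^{p−1} non-decreasing and φ'(t)/t^{q−1} non-increasing on (0,∞). Then there is a constant c > 0 depending only on p, q such that for all κ ∈ (0,∞) and all x, y ∈ ℝⁿ not both zero: φ(|x−y|) ≤ c·( κ·(φ(|x|) + φ(|y|)) + κ⁻¹·(φ'(|x|+|y|)/(|x|+|y|))·|x−y|² ). -/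
/-!
Comparing φ' with `c t ^ (p - 1)` and `c t ^ (q - 1)` through the mean value inequality
turns (Inc)_{p-1} and (Dec)_{q-1} of φ' into `p φ(t) ≤ t φ'(t) ≤ q φ(t)` and
`φ(2t) ≤ 2 ^ q φ(t)`; in particular φ' ≥ 0, so φ and φ' are nondecreasing.
With `d = |x - y| ≤ s = |x| + |y|` this gives `φ(d) ≤ d φ'(d) ≤ d φ'(s)`, and the splitting
`d ≤ κ s / 2 + d² / (2 κ s)` bounds `d φ'(s)` by
`κ s φ'(s) / 2 ≤ κ q 2 ^ q (φ(|x|) + φ(|y|)) / 2` plus the quadratic term.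
-/

open Set

theorem sub_le_sub_of_hasDerivAt_le {f g f' g' : ℝ → ℝ} {a b : ℝ} (hab : a ≤ b)
    (hfc : ContinuousOn f (Icc a b)) (hgc : ContinuousOn g (Icc a b))
    (hf : ∀ x ∈ Ioo a b, HasDerivAt f (f' x) x) (hg : ∀ x ∈ Ioo a b, HasDerivAt g (g' x) x)
    (hle : ∀ x ∈ Ioo a b, f' x ≤ g' x) :
    f b - f a ≤ g b - g a := by
  have hmono : MonotoneOn (fun x => g x - f x) (Icc a b) := by
    refine monotoneOn_of_hasDerivWithinAt_nonneg (f' := fun x => g' x - f' x)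
      (convex_Icc a b) (hgc.sub hfc) (fun x hx => ?_) (fun x hx => ?_)
    · rw [interior_Icc] at hx ⊢
      exact ((hg x hx).sub (hf x hx)).hasDerivWithinAt
    · rw [interior_Icc] at hx
      exact sub_nonneg.2 (hle x hx)
  linarith [hmono (left_mem_Icc.2 hab) (right_mem_Icc.2 hab) hab]

theorem hasDerivAt_mul_rpow_div (c : ℝ) {r : ℝ} (hr : 1 ≤ r) (x : ℝ) :
    HasDerivAt (fun s => c * s ^ r / r) (c * x ^ (r - 1)) x := by
  have hr0 : r ≠ 0 := by positivity
  exact (((Real.hasDerivAt_rpow_const (Or.inr hr)).const_mul c).div_const r).congr_deriv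
    (by field_simp)

theorem div_rpow_sub_one_mul_rpow (a : ℝ) {t : ℝ} (ht : 0 < t) (r : ℝ) :
    a / t ^ (r - 1) * t ^ r = t * a := by
  rw [Real.rpow_sub_one ht.ne']
  have := (Real.rpow_pos_of_pos ht r).ne'
  field_simp

section DivRpow

variable {f : ℝ → ℝ} {r s t : ℝ}

theorem MonotoneOn.apply_le_div_rpow_mul_rpow (h : MonotoneOn (fun t => f t / t ^ r) (Ioi 0))
    (hs : 0 < s) (hst : s ≤ t) : f s ≤ f t / t ^ r * s ^ r :=
  (div_le_iff₀ (Real.rpow_pos_of_pos hs r)).1 (h hs (hs.trans_le hst) hst)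

theorem AntitoneOn.apply_le_div_rpow_mul_rpow (h : AntitoneOn (fun t => f t / t ^ r) (Ioi 0))
    (hs : 0 < s) (hst : s ≤ t) : f t ≤ f s / s ^ r * t ^ r :=
  (div_le_iff₀ (Real.rpow_pos_of_pos (hs.trans_le hst) r)).1 (h hs (hs.trans_le hst) hst)

theorem AntitoneOn.div_rpow_mul_rpow_le_apply (h : AntitoneOn (fun t => f t / t ^ r) (Ioi 0))
    (hs : 0 < s) (hst : s ≤ t) : f t / t ^ r * s ^ r ≤ f s :=
  (le_div_iff₀ (Real.rpow_pos_of_pos hs r)).1 (h hs (hs.trans_le hst) hst)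

theorem monotoneOn_of_monotoneOn_div_rpow (hr : 0 ≤ r) (hf : ∀ t ∈ Ioi (0 : ℝ), 0 ≤ f t)
    (h : MonotoneOn (fun t => f t / t ^ r) (Ioi 0)) : MonotoneOn f (Ioi 0) :=
  fun s hs t ht hst =>
  calc f s ≤ f t / t ^ r * s ^ r := h.apply_le_div_rpow_mul_rpow hs hst
    _ ≤ f t / t ^ r * t ^ r := mul_le_mul_of_nonneg_left (Real.rpow_le_rpow hs.le hst hr)
        (div_nonneg (hf t ht) (Real.rpow_nonneg ht.le r))
    _ = f t := div_mul_cancel₀ _ (Real.rpow_pos_of_pos ht r).ne'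

end DivRpow

theorem apply_add_le_of_monotoneOn {f : ℝ → ℝ} {C : ℝ} (hC : 0 ≤ C)
    (hf : ∀ t, 0 ≤ t → 0 ≤ f t) (hmono : MonotoneOn f (Ici 0))
    (hdouble : ∀ u, 0 < u → f (2 * u) ≤ C * f u) {a b : ℝ} (ha : 0 ≤ a) (hb : 0 ≤ b)
    (hab : 0 < a + b) : f (a + b) ≤ C * (f a + f b) := by
  wlog hle : a ≤ b generalizing a b
  · rw [add_comm a, add_comm (f a)]
    exact this hb ha (by linarith) (by linarith)
  have h2b : (0 : ℝ) ≤ 2 * b := by positivity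
  calc f (a + b) ≤ f (2 * b) := hmono hab.le h2b (by linarith)
    _ ≤ C * f b := hdouble b (by linarith)
    _ ≤ C * (f a + f b) := by gcongr; linarith [hf a ha]

theorem le_mul_add_inv_mul_sq_div {κ s : ℝ} (hκ : 0 < κ) (hs : 0 < s) (d : ℝ) :
    d ≤ κ / 2 * s + (2 * κ)⁻¹ * d ^ 2 / s := by
  have hsq : 0 ≤ (κ * s - d) ^ 2 / (2 * κ * s) := by positivity
  have expand : (κ * s - d) ^ 2 / (2 * κ * s) = κ / 2 * s + (2 * κ)⁻¹ * d ^ 2 / s - d := by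
    field_simp
    ring
  linarith

section Orlicz

variable {φ φ' : ℝ → ℝ} (hderiv : ∀ t ∈ Ici (0 : ℝ), HasDerivWithinAt φ (φ' t) (Ici 0) t)
include hderiv

theorem continuousOn_Icc_of_hasDerivWithinAt_Ici {a b : ℝ} (ha : 0 ≤ a) :
    ContinuousOn φ (Icc a b) := fun t ht =>
  ((hderiv t (ha.trans ht.1)).continuousWithinAt).mono fun _ hs => ha.trans hs.1

theorem hasDerivAt_of_hasDerivWithinAt_Ici {a b : ℝ} (ha : 0 ≤ a) :
    ∀ t ∈ Ioo a b, HasDerivAt φ (φ' t) t := fun t ht =>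
  (hderiv t (ha.trans ht.1.le)).hasDerivAt (Ici_mem_nhds (ha.trans_lt ht.1))

theorem mul_apply_le_mul_deriv (hφ0 : φ 0 = 0) {p : ℝ} (hp : 1 < p)
    (hinc : MonotoneOn (fun t => φ' t / t ^ (p - 1)) (Ioi 0)) {t : ℝ} (ht : 0 < t) :
    p * φ t ≤ t * φ' t := by
  have hcmp := sub_le_sub_of_hasDerivAt_le ht.le
    (continuousOn_Icc_of_hasDerivWithinAt_Ici hderiv le_rfl)
    (HasDerivAt.continuousOn fun s _ => hasDerivAt_mul_rpow_div (φ' t / t ^ (p - 1)) hp.le s)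
    (hasDerivAt_of_hasDerivWithinAt_Ici hderiv le_rfl)
    (fun s _ => hasDerivAt_mul_rpow_div _ hp.le s)
    (fun s hs => hinc.apply_le_div_rpow_mul_rpow hs.1 hs.2.le)
  rw [hφ0, Real.zero_rpow (by positivity), div_rpow_sub_one_mul_rpow _ ht] at hcmp
  simp only [mul_zero, zero_div, sub_zero] at hcmp
  rw [le_div_iff₀ (by positivity)] at hcmp
  linarith

theorem mul_deriv_le_mul_apply (hφ0 : φ 0 = 0) {q : ℝ} (hq : 1 < q)
    (hdec : AntitoneOn (fun t => φ' t / t ^ (q - 1)) (Ioi 0)) {t : ℝ} (ht : 0 < t) :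
    t * φ' t ≤ q * φ t := by
  have hcmp := sub_le_sub_of_hasDerivAt_le ht.le
    (HasDerivAt.continuousOn fun s _ => hasDerivAt_mul_rpow_div (φ' t / t ^ (q - 1)) hq.le s)
    (continuousOn_Icc_of_hasDerivWithinAt_Ici hderiv le_rfl)
    (fun s _ => hasDerivAt_mul_rpow_div _ hq.le s)
    (hasDerivAt_of_hasDerivWithinAt_Ici hderiv le_rfl)
    (fun s hs => hdec.div_rpow_mul_rpow_le_apply hs.1 hs.2.le)
  rw [hφ0, Real.zero_rpow (by positivity), div_rpow_sub_one_mul_rpow _ ht] at hcmp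
  simp only [mul_zero, zero_div, sub_zero] at hcmp
  rw [div_le_iff₀ (by positivity)] at hcmp
  linarith

theorem apply_mul_le_rpow_mul (hφ0 : φ 0 = 0) {q : ℝ} (hq : 1 < q)
    (hdec : AntitoneOn (fun t => φ' t / t ^ (q - 1)) (Ioi 0)) {u l : ℝ} (hu : 0 < u)
    (hl : 1 ≤ l) : φ (l * u) ≤ l ^ q * φ u := by
  have hcmp := sub_le_sub_of_hasDerivAt_le (le_mul_of_one_le_left hu.le hl)
    (continuousOn_Icc_of_hasDerivWithinAt_Ici hderiv hu.le)
    (HasDerivAt.continuousOn fun s _ => hasDerivAt_mul_rpow_div (φ' u / u ^ (q - 1)) hq.le s)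
    (hasDerivAt_of_hasDerivWithinAt_Ici hderiv hu.le)
    (fun s _ => hasDerivAt_mul_rpow_div _ hq.le s)
    (fun s hs => hdec.apply_le_div_rpow_mul_rpow hu hs.1.le)
  have hscale : φ' u / u ^ (q - 1) * (l * u) ^ q = l ^ q * (u * φ' u) := by
    rw [Real.mul_rpow (by positivity) hu.le, ← div_rpow_sub_one_mul_rpow _ hu]
    ring
  rw [hscale, div_rpow_sub_one_mul_rpow _ hu, mul_div_assoc] at hcmp
  have hlq : 1 ≤ l ^ q := Real.one_le_rpow hl (by positivity)
  have hcomp : u * φ' u / q ≤ φ u :=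
    (div_le_iff₀' (by positivity)).2 (mul_deriv_le_mul_apply hderiv hφ0 hq hdec hu)
  calc φ (l * u) ≤ φ u + (l ^ q - 1) * (u * φ' u / q) := by linarith
    _ ≤ φ u + (l ^ q - 1) * φ u := by gcongr
    _ = l ^ q * φ u := by ring

theorem deriv_nonneg_of_monotoneOn_div_rpow (hφ0 : φ 0 = 0) (hφ : ∀ t, 0 ≤ t → 0 ≤ φ t)
    {p : ℝ} (hp : 1 < p) (hinc : MonotoneOn (fun t => φ' t / t ^ (p - 1)) (Ioi 0)) {t : ℝ}
    (ht : 0 < t) : 0 ≤ φ' t := by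
  have hcomp := mul_apply_le_mul_deriv hderiv hφ0 hp hinc ht
  have hφt := hφ t ht.le
  exact nonneg_of_mul_nonneg_right ((mul_nonneg (by linarith) hφt).trans hcomp) ht

theorem monotoneOn_Ici_of_deriv_nonneg (hφ' : ∀ t, 0 < t → 0 ≤ φ' t) :
    MonotoneOn φ (Ici 0) := fun a ha b _ hab => by
  have := sub_le_sub_of_hasDerivAt_le (f := fun _ => 0) (f' := fun _ => 0) hab
    continuousOn_const (continuousOn_Icc_of_hasDerivWithinAt_Ici hderiv ha)
    (fun _ _ => hasDerivAt_const _ _) (hasDerivAt_of_hasDerivWithinAt_Ici hderiv ha)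
    (fun x hx => hφ' x (lt_of_le_of_lt ha hx.1))
  linarith

theorem apply_le_mul_deriv_of_le (hφ0 : φ 0 = 0) (hφ : ∀ t, 0 ≤ t → 0 ≤ φ t) {p : ℝ}
    (hp : 1 < p) (hinc : MonotoneOn (fun t => φ' t / t ^ (p - 1)) (Ioi 0)) {d s : ℝ}
    (hd : 0 ≤ d) (hds : d ≤ s) : φ d ≤ d * φ' s := by
  rcases hd.eq_or_lt with rfl | hd
  · simp [hφ0]
  have hmono' := monotoneOn_of_monotoneOn_div_rpow (by linarith)
    (fun t => deriv_nonneg_of_monotoneOn_div_rpow hderiv hφ0 hφ hp hinc) hinc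
  calc φ d ≤ p * φ d := le_mul_of_one_le_left (hφ d hd.le) hp.le
    _ ≤ d * φ' d := mul_apply_le_mul_deriv hderiv hφ0 hp hinc hd
    _ ≤ d * φ' s := by gcongr; exact hmono' hd (hd.trans_le hds) hds

theorem apply_le_splitting (hφ0 : φ 0 = 0) (hφ : ∀ t, 0 ≤ t → 0 ≤ φ t) {p q : ℝ}
    (hp : 1 < p) (hinc : MonotoneOn (fun t => φ' t / t ^ (p - 1)) (Ioi 0)) (hq : 1 < q)
    (hdec : AntitoneOn (fun t => φ' t / t ^ (q - 1)) (Ioi 0)) {κ a b d : ℝ} (hκ : 0 < κ)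
    (ha : 0 ≤ a) (hb : 0 ≤ b) (hab : 0 < a + b) (hd : 0 ≤ d) (hdab : d ≤ a + b) :
    φ d ≤ q * 2 ^ q * (κ * (φ a + φ b) + κ⁻¹ * (φ' (a + b) / (a + b)) * d ^ 2) := by
  have hφ' : ∀ t, 0 < t → 0 ≤ φ' t :=
    fun t => deriv_nonneg_of_monotoneOn_div_rpow hderiv hφ0 hφ hp hinc
  have hφab : φ (a + b) ≤ 2 ^ q * (φ a + φ b) :=
    apply_add_le_of_monotoneOn (by positivity) hφ (monotoneOn_Ici_of_deriv_nonneg hderiv hφ')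
      (fun u hu => apply_mul_le_rpow_mul hderiv hφ0 hq hdec hu one_le_two) ha hb hab
  have hsφ' : (a + b) * φ' (a + b) ≤ q * 2 ^ q * (φ a + φ b) := by
    rw [mul_assoc]
    exact (mul_deriv_le_mul_apply hderiv hφ0 hq hdec hab).trans (by gcongr)
  have hc : 1 ≤ q * 2 ^ q :=
    one_le_mul_of_one_le_of_one_le hq.le (Real.one_le_rpow one_le_two (by linarith))
  have hφ'ab := hφ' _ hab
  have hφa := hφ a ha
  have hφb := hφ b hb
  set X := κ⁻¹ * (φ' (a + b) / (a + b)) * d ^ 2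
  calc φ d ≤ d * φ' (a + b) := apply_le_mul_deriv_of_le hderiv hφ0 hφ hp hinc hd hdab
    _ ≤ (κ / 2 * (a + b) + (2 * κ)⁻¹ * d ^ 2 / (a + b)) * φ' (a + b) := by
        gcongr; exact le_mul_add_inv_mul_sq_div hκ hab d
    _ = κ / 2 * ((a + b) * φ' (a + b)) + 1 / 2 * X := by ring
    _ ≤ κ / 2 * (q * 2 ^ q * (φ a + φ b)) + q * 2 ^ q * X := by gcongr; linarith
    _ ≤ q * 2 ^ q * (κ * (φ a + φ b) + X) := by
        have : 0 ≤ κ * (q * 2 ^ q * (φ a + φ b)) := by positivity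
        linarith

end Orlicz

/-- Orlicz-type splitting: if φ ∈ C¹([0,∞)), φ(0)=0, with φ' satisfying
(Inc)_{p−1} and (Dec)_{q−1}, then there is c > 0 depending only on p, q such that for
all κ > 0 and all x, y ∈ ℝⁿ not both zero,
φ(|x−y|) ≤ c(κ(φ(|x|) + φ(|y|)) + κ⁻¹ (φ'(|x|+|y|)/(|x|+|y|))|x−y|²). -/
theorem stmt_19 (p q : ℝ) (hp : 1 < p) (hpq : p ≤ q) :
    ∃ c > 0, ∀ (n : ℕ) (φ φ' : ℝ → ℝ),
      φ 0 = 0 →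
      (∀ t, 0 ≤ t → 0 ≤ φ t) →
      (∀ t ∈ Set.Ici (0:ℝ), HasDerivWithinAt φ (φ' t) (Set.Ici 0) t) →
      ContinuousOn φ' (Set.Ici (0:ℝ)) →
      MonotoneOn (fun t => φ' t / t ^ (p - 1)) (Set.Ioi (0:ℝ)) →
      AntitoneOn (fun t => φ' t / t ^ (q - 1)) (Set.Ioi (0:ℝ)) →
      ∀ κ : ℝ, 0 < κ → ∀ x y : EuclideanSpace ℝ (Fin n), 0 < ‖x‖ + ‖y‖ →
        φ ‖x - y‖ ≤ c * (κ * (φ ‖x‖ + φ ‖y‖) +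
          κ⁻¹ * (φ' (‖x‖ + ‖y‖) / (‖x‖ + ‖y‖)) * ‖x - y‖ ^ 2) := by
  have hq : 1 < q := hp.trans_le hpq
  refine ⟨q * 2 ^ q, by positivity, ?_⟩
  intro n φ φ' hφ0 hφ hderiv _ hinc hdec κ hκ x y hxy
  exact apply_le_splitting hderiv hφ0 hφ hp hinc hq hdec hκ (norm_nonneg x) (norm_nonneg y) hxy
    (norm_nonneg _) (norm_sub_le x y)
end
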